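/- Let D be a probability distribution on [0,1] × {0,1}, and let q(p) = E[y | p]. Then for every positive integer m and every index i in {0,...,m}, the soft-binned quantity Σ_{j≤i} π_j·max(q_j - (i+1)/m, 0) + Σ_{j>i} π_j·max(i/m - q_j, 0) is at most sup over μ in [0,1] of E[max(q - μ, 0)·1[p ≤ μ] + max(μ - q, 0)·1[p > μ]]. In particular, SCDL_m(D) ≤ CDL(D), where CDL(D) is at least this supremum. -/

import Mathlib

open Finset

/-- Triangular weight function `w_i(x) = max(1 - |m·x - i|, 0)`. -/
noncomputable def tri (m i : ℕ) (x : ℝ) : ℝ := max (1 - |(m : ℝ) * x - (i : ℝ)|) 0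

/-- Bin weight `π_i = E[w_i(p)]` for a finitely supported distribution given by
a finite set `J` of atoms with probabilities `ν` and prediction map `p`. -/
noncomputable def binW {α : Type*} (m : ℕ) (J : Finset α) (ν : α → ℝ) (p : α → ℝ)
    (i : ℕ) : ℝ :=
  ∑ z ∈ J, ν z * tri m i (p z)

/-- Bin conditional mean `q_i = E[w_i(p)·y] / π_i` (zero if `π_i = 0`, by the
convention of division by zero). -/
noncomputable def binQ {α : Type*} (m : ℕ) (J : Finset α) (ν : α → ℝ) (p y : α → ℝ)
    (i : ℕ) : ℝ :=
  (∑ z ∈ J, ν z * tri m i (p z) * y z) / binW m J ν p i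

/-- Soft-binned calibration fixed decision loss at index `i`:
`Σ_{j≤i} π_j·max(q_j - (i+1)/m, 0) + Σ_{j>i} π_j·max(i/m - q_j, 0)`. -/
noncomputable def SCFDL {α : Type*} (m : ℕ) (J : Finset α) (ν : α → ℝ) (p y : α → ℝ)
    (i : ℕ) : ℝ :=
  ∑ j ∈ Finset.range (i + 1), binW m J ν p j * max (binQ m J ν p y j - ((i : ℝ) + 1) / m) 0
    + ∑ j ∈ Finset.Icc (i + 1) m, binW m J ν p j * max ((i : ℝ) / m - binQ m J ν p y j) 0

/-- `SCDL_m(D) = max_{i=0,...,m} SCFDL_{m,i}(D)`. -/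
noncomputable def SCDLm {α : Type*} (m : ℕ) (J : Finset α) (ν : α → ℝ) (p y : α → ℝ) : ℝ :=
  Finset.sup' (Finset.range (m + 1)) (Finset.nonempty_range_iff.mpr (Nat.succ_ne_zero m))
    (SCFDL m J ν p y)

/-- `SCDL(D) = inf over m ∈ {2,4,8,...} of max(SCDL_m(D), 1/m)`. -/
noncomputable def SCDL {α : Type*} (J : Finset α) (ν : α → ℝ) (p y : α → ℝ) : ℝ :=
  ⨅ k : ℕ, max (SCDLm (2 ^ (k + 1)) J ν p y) (1 / 2 ^ (k + 1))

/-- The true conditional probability `q(p₀) = E[y | p = p₀]` for a finitely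
supported distribution. -/
noncomputable def condMean (S : Finset (ℝ × ℝ)) (μ : ℝ × ℝ → ℝ) (p₀ : ℝ) : ℝ :=
  (∑ z ∈ S, if z.1 = p₀ then μ z * z.2 else 0) /
    (∑ z ∈ S, if z.1 = p₀ then μ z else 0)

/-- `E[max(q - t, 0)·1[p ≤ t] + max(t - q, 0)·1[p > t]]` with `q = E[y|p]`. -/
noncomputable def fixedLoss (S : Finset (ℝ × ℝ)) (μ : ℝ × ℝ → ℝ) (t : ℝ) : ℝ :=
  ∑ z ∈ S, μ z *
    (if z.1 ≤ t then max (condMean S μ z.1 - t) 0 else max (t - condMean S μ z.1) 0)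

/-! Round `p` to the grid point `j/m` with probability `w_j(p)`. The soft bin means are then
conditional means of `q = E[y | p]`, so Jensen's inequality for `x ↦ max (x - c) 0` bounds
`SCFDL_{m,i}` by `E[Λ(p) (q - (i+1)/m)⁺ + (1 - Λ(p)) (i/m - q)⁺]`, where
`Λ(p) = ∑_{j ≤ i} w_j(p)` is the probability of rounding to at most `i/m`. But `Λ(p)` is also
the probability that `p ≤ t` for `t` uniform on `[i/m, (i+1)/m]`, so this bound is the average
over that window of fixed-threshold losses, each at most the supremum. -/

open MeasureTheory

theorem sum_mul_max_div_sub_le {ι : Type*} (s : Finset ι) {a : ι → ℝ} (ha : ∀ i ∈ s, 0 ≤ a i)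
    (v : ι → ℝ) (c : ℝ) :
    (∑ i ∈ s, a i) * max ((∑ i ∈ s, a i * v i) / (∑ i ∈ s, a i) - c) 0
      ≤ ∑ i ∈ s, a i * max (v i - c) 0 := by
  have hW : 0 ≤ ∑ i ∈ s, a i := sum_nonneg ha
  have hrhs : 0 ≤ ∑ i ∈ s, a i * max (v i - c) 0 :=
    sum_nonneg fun i hi => mul_nonneg (ha i hi) (le_max_right _ _)
  rcases hW.eq_or_lt with hW0 | hWpos
  · rwa [← hW0, zero_mul]
  rw [mul_max_of_nonneg _ _ hW, mul_zero, mul_sub, mul_div_cancel₀ _ hWpos.ne', sum_mul,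
    ← sum_sub_distrib]
  exact max_le (sum_le_sum fun i hi => by
    rw [← mul_sub]; exact mul_le_mul_of_nonneg_left (le_max_left _ _) (ha i hi)) hrhs

theorem sum_mul_max_sub_div_le {ι : Type*} (s : Finset ι) {a : ι → ℝ} (ha : ∀ i ∈ s, 0 ≤ a i)
    (v : ι → ℝ) (c : ℝ) :
    (∑ i ∈ s, a i) * max (c - (∑ i ∈ s, a i * v i) / (∑ i ∈ s, a i)) 0
      ≤ ∑ i ∈ s, a i * max (c - v i) 0 := by
  have h := sum_mul_max_div_sub_le s ha (fun i => -v i) (-c)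
  simp only [mul_neg, sum_neg_distrib, neg_div, sub_neg_eq_add, neg_add_eq_sub] at h
  exact h

theorem tri_nonneg (m i : ℕ) (x : ℝ) : 0 ≤ tri m i x := le_max_right _ _

theorem sum_range_succ_tri (m : ℕ) {x : ℝ} (hx : 0 ≤ x) (i : ℕ) :
    ∑ j ∈ range (i + 1), tri m j x = max (i + 1 - m * x) 0 - max (i - m * x) 0 := by
  have hmx : 0 ≤ (m : ℝ) * x := mul_nonneg m.cast_nonneg hx
  induction i with
  | zero =>
    simp only [sum_range_one, tri, Nat.cast_zero, sub_zero, zero_add, abs_of_nonneg hmx,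
      zero_sub, max_eq_right (neg_nonpos.2 hmx)]
  | succ i ih =>
    rw [sum_range_succ, ih, tri]
    push_cast
    rcases le_total (m * x) ((i : ℝ) + 1) with h | h
    · rw [abs_of_nonpos (by linarith)]
      simp only [max_def]
      split_ifs <;> linarith
    · rw [abs_of_nonneg (by linarith)]
      simp only [max_def]
      split_ifs <;> linarith

theorem sum_range_tri_eq_one (m : ℕ) {x : ℝ} (hx₀ : 0 ≤ x) (hx₁ : x ≤ 1) :
    ∑ j ∈ range (m + 1), tri m j x = 1 := by
  have : (m : ℝ) * x ≤ m := mul_le_of_le_one_right m.cast_nonneg hx₁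
  rw [sum_range_succ_tri m hx₀, max_eq_left (by linarith), max_eq_left (by linarith)]
  ring

theorem sum_Icc_tri (m : ℕ) {x : ℝ} (hx₀ : 0 ≤ x) (hx₁ : x ≤ 1) {i : ℕ} (hi : i ≤ m) :
    ∑ j ∈ Icc (i + 1) m, tri m j x = 1 - ∑ j ∈ range (i + 1), tri m j x := by
  rw [← sum_range_tri_eq_one m hx₀ hx₁, ← sum_range_add_sum_Ico _ (by omega : i + 1 ≤ m + 1),
    Ico_add_one_right_eq_Icc]
  ring

section SoftBins

variable {α : Type*} {m : ℕ} {J : Finset α} {ν : α → ℝ} {p y : α → ℝ}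

theorem binW_mul_max_binQ_sub_le (hν : ∀ z ∈ J, 0 ≤ ν z) (j : ℕ) (c : ℝ) :
    binW m J ν p j * max (binQ m J ν p y j - c) 0
      ≤ ∑ z ∈ J, ν z * tri m j (p z) * max (y z - c) 0 :=
  sum_mul_max_div_sub_le J (fun z hz => mul_nonneg (hν z hz) (tri_nonneg _ _ _)) y c

theorem binW_mul_max_sub_binQ_le (hν : ∀ z ∈ J, 0 ≤ ν z) (j : ℕ) (c : ℝ) :
    binW m J ν p j * max (c - binQ m J ν p y j) 0
      ≤ ∑ z ∈ J, ν z * tri m j (p z) * max (c - y z) 0 :=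
  sum_mul_max_sub_div_le J (fun z hz => mul_nonneg (hν z hz) (tri_nonneg _ _ _)) y c

theorem SCFDL_le_sum_tri (hν : ∀ z ∈ J, 0 ≤ ν z) (i : ℕ) :
    SCFDL m J ν p y i ≤ ∑ z ∈ J, ν z *
      ((∑ j ∈ range (i + 1), tri m j (p z)) * max (y z - ((i : ℝ) + 1) / m) 0
        + (∑ j ∈ Icc (i + 1) m, tri m j (p z)) * max ((i : ℝ) / m - y z) 0) := by
  calc SCFDL m J ν p y i
      ≤ ∑ j ∈ range (i + 1), ∑ z ∈ J, ν z * tri m j (p z) * max (y z - ((i : ℝ) + 1) / m) 0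
        + ∑ j ∈ Icc (i + 1) m, ∑ z ∈ J, ν z * tri m j (p z) * max ((i : ℝ) / m - y z) 0 :=
        add_le_add (sum_le_sum fun j _ => binW_mul_max_binQ_sub_le hν j _)
          (sum_le_sum fun j _ => binW_mul_max_sub_binQ_le hν j _)
    _ = _ := by
        rw [sum_comm, sum_comm (s := Icc (i + 1) m), ← sum_add_distrib]
        refine sum_congr rfl fun z _ => ?_
        rw [mul_add, sum_mul, sum_mul, mul_sum, mul_sum]
        congr 1 <;> exact sum_congr rfl fun j _ => by ring

end SoftBins

theorem sum_filter_fst_mul_condMean {S : Finset (ℝ × ℝ)} {μ : ℝ × ℝ → ℝ}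
    (hμ : ∀ z ∈ S, 0 ≤ μ z) (p₀ : ℝ) :
    (∑ z ∈ S with z.1 = p₀, μ z) * condMean S μ p₀ = ∑ z ∈ S with z.1 = p₀, μ z * z.2 := by
  rw [condMean, ← sum_filter, ← sum_filter]
  rcases eq_or_ne (∑ z ∈ S with z.1 = p₀, μ z) 0 with h | h
  · have hμ0 := (sum_eq_zero_iff_of_nonneg fun z hz => hμ z (mem_filter.1 hz).1).1 h
    rw [h, zero_mul]
    exact (sum_eq_zero fun z hz => by rw [hμ0 z hz, zero_mul]).symm
  · exact mul_div_cancel₀ _ h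

theorem sum_mul_snd_eq_sum_mul_condMean {S : Finset (ℝ × ℝ)} {μ : ℝ × ℝ → ℝ}
    (hμ : ∀ z ∈ S, 0 ≤ μ z) (f : ℝ → ℝ) :
    ∑ z ∈ S, μ z * f z.1 * z.2 = ∑ z ∈ S, μ z * f z.1 * condMean S μ z.1 := by
  have hfst : ∀ z ∈ S, z.1 ∈ S.image Prod.fst := fun z hz => mem_image_of_mem _ hz
  rw [← sum_fiberwise_of_maps_to hfst, ← sum_fiberwise_of_maps_to hfst]
  refine sum_congr rfl fun p₀ _ => ?_
  calc ∑ z ∈ S with z.1 = p₀, μ z * f z.1 * z.2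
      = f p₀ * ∑ z ∈ S with z.1 = p₀, μ z * z.2 := by
        rw [mul_sum]
        exact sum_congr rfl fun z hz => by rw [(mem_filter.1 hz).2]; ring
    _ = f p₀ * ((∑ z ∈ S with z.1 = p₀, μ z) * condMean S μ p₀) := by
        rw [sum_filter_fst_mul_condMean hμ]
    _ = ∑ z ∈ S with z.1 = p₀, μ z * f z.1 * condMean S μ z.1 := by
        rw [sum_mul, mul_sum]
        exact sum_congr rfl fun z hz => by rw [(mem_filter.1 hz).2]; ring

theorem SCFDL_snd_eq_condMean {S : Finset (ℝ × ℝ)} {μ : ℝ × ℝ → ℝ}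
    (hμ : ∀ z ∈ S, 0 ≤ μ z) (m i : ℕ) :
    SCFDL m S μ Prod.fst Prod.snd i = SCFDL m S μ Prod.fst (fun z => condMean S μ z.1) i := by
  simp only [SCFDL, binQ, sum_mul_snd_eq_sum_mul_condMean hμ (tri m _)]

theorem intervalIntegrable_ite (p A B a b : ℝ) :
    IntervalIntegrable (fun t => if p ≤ t then A else B) volume a b := by
  rcases le_total B A with h | h
  · exact Monotone.intervalIntegrable fun s t hst => by split_ifs <;> linarith
  · exact Antitone.intervalIntegrable fun s t hst => by split_ifs <;> linarith

/-- `t ↦ B t + (A - B) (t - p)⁺` is a right antiderivative of the step function. -/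
theorem integral_ite_eq (p A B a b : ℝ) :
    ∫ t in a..b, (if p ≤ t then A else B)
      = B * (b - a) + (A - B) * (max (b - p) 0 - max (a - p) 0) := by
  have hderiv : ∀ x, HasDerivWithinAt (fun t => B * t + (A - B) * max (t - p) 0)
      (if p ≤ x then A else B) (Set.Ioi x) x := by
    intro x
    split_ifs with hpx
    · have h : HasDerivWithinAt (fun t => B * t + (A - B) * (t - p)) A (Set.Ioi x) x :=
        (((hasDerivAt_id' x).const_mul B).fun_add (((hasDerivAt_id' x).sub_const p).const_mul
          (A - B))).congr_deriv (by ring) |>.hasDerivWithinAt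
      refine h.congr (fun t (ht : x < t) => ?_) ?_
      · rw [max_eq_left (by linarith)]
      · rw [max_eq_left (by linarith)]
    · have h : HasDerivWithinAt (fun t => B * t) B (Set.Ioi x) x :=
        ((hasDerivAt_id' x).const_mul B).congr_deriv (mul_one B) |>.hasDerivWithinAt
      refine h.congr_of_eventuallyEq ?_ ?_
      · filter_upwards [nhdsWithin_le_nhds (Iio_mem_nhds (not_le.1 hpx))] with t (ht : t < p)
        rw [max_eq_right (by linarith), mul_zero, add_zero]
      · rw [max_eq_right (by linarith), mul_zero, add_zero]
  rw [intervalIntegral.integral_eq_sub_of_hasDeriv_right (by fun_prop) (fun x _ => hderiv x)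
    (intervalIntegrable_ite p A B a b)]
  ring

theorem sum_mul_tri_mixture_le {α : Type*} {J : Finset α} {ν p A B : α → ℝ}
    (hp : ∀ z ∈ J, p z ∈ Set.Icc 0 1) {m : ℕ} (hm : 0 < m) {i : ℕ} (hi : i ≤ m) {K : ℝ}
    (hK : ∀ t ∈ Set.Icc ((i : ℝ) / m) (((i : ℝ) + 1) / m),
      ∑ z ∈ J, ν z * (if p z ≤ t then A z else B z) ≤ K) :
    ∑ z ∈ J, ν z * ((∑ j ∈ range (i + 1), tri m j (p z)) * A z
      + (∑ j ∈ Icc (i + 1) m, tri m j (p z)) * B z) ≤ K := by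
  have hm' : (0 : ℝ) < m := Nat.cast_pos.2 hm
  have hab : (i : ℝ) / m ≤ (i + 1) / m := by gcongr; linarith
  have hmab : (m : ℝ) * ((i + 1) / m - i / m) = 1 := by field_simp; ring
  set a : ℝ := i / m
  set b : ℝ := (i + 1) / m
  have hweight : ∀ x ∈ Set.Icc (0 : ℝ) 1,
      ∑ j ∈ range (i + 1), tri m j x = m * (max (b - x) 0 - max (a - x) 0) := by
    intro x hx
    rw [sum_range_succ_tri m hx.1, mul_sub, mul_max_of_nonneg _ _ hm'.le,
      mul_max_of_nonneg _ _ hm'.le, mul_sub, mul_sub, mul_div_cancel₀ _ hm'.ne',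
      mul_div_cancel₀ _ hm'.ne', mul_zero]
  have hint : IntervalIntegrable (fun t => ∑ z ∈ J, ν z * (if p z ≤ t then A z else B z))
      volume a b := by
    simpa only [← sum_fn] using IntervalIntegrable.sum J
      fun z _ => (intervalIntegrable_ite (p z) (A z) (B z) a b).const_mul (ν z)
  calc _ = m * ∫ t in a..b, ∑ z ∈ J, ν z * (if p z ≤ t then A z else B z) := by
        rw [intervalIntegral.integral_finsetSum
          fun z _ => (intervalIntegrable_ite _ _ _ a b).const_mul _, mul_sum]
        refine sum_congr rfl fun z hz => ?_
        rw [intervalIntegral.integral_const_mul, integral_ite_eq,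
          sum_Icc_tri m (hp z hz).1 (hp z hz).2 hi, hweight _ (hp z hz)]
        linear_combination -(ν z * B z) * hmab
    _ ≤ m * ((b - a) * K) := by
        gcongr
        simpa using intervalIntegral.integral_mono_on hab hint intervalIntegrable_const hK
    _ = K := by rw [← mul_assoc, hmab, one_mul]

/-- The threshold is clipped to `[0, 1]` because for `i = m` the window `[i/m, (i+1)/m]`
leaves the unit interval. -/
theorem sum_ite_le_fixedLoss_min {S : Finset (ℝ × ℝ)} {μ : ℝ × ℝ → ℝ}
    (hμ : ∀ z ∈ S, 0 ≤ μ z) (hS : ∀ z ∈ S, z.1 ≤ 1) {a b t : ℝ} (hat : a ≤ t) (htb : t ≤ b) :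
    ∑ z ∈ S, μ z * (if z.1 ≤ t then max (condMean S μ z.1 - b) 0
      else max (a - condMean S μ z.1) 0) ≤ fixedLoss S μ (min t 1) := by
  refine sum_le_sum fun z hz => mul_le_mul_of_nonneg_left ?_ (hμ z hz)
  by_cases hzt : z.1 ≤ t
  · rw [if_pos hzt, if_pos (le_min hzt (hS z hz))]
    exact max_le_max (by linarith [min_le_left t 1]) le_rfl
  · have ht1 : min t 1 = t := min_eq_left (by linarith [hS z hz])
    rw [if_neg hzt, ht1, if_neg hzt]
    exact max_le_max (by linarith) le_rfl

theorem SCFDL_le_of_forall_fixedLoss_le {S : Finset (ℝ × ℝ)} {μ : ℝ × ℝ → ℝ}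
    (hμ : ∀ z ∈ S, 0 ≤ μ z) (hS : ∀ z ∈ S, z.1 ∈ Set.Icc 0 1) {m : ℕ} (hm : 0 < m) {K : ℝ}
    (hK : ∀ t ∈ Set.Icc 0 1, fixedLoss S μ t ≤ K) {i : ℕ} (hi : i ≤ m) :
    SCFDL m S μ Prod.fst Prod.snd i ≤ K := by
  rw [SCFDL_snd_eq_condMean hμ]
  refine (SCFDL_le_sum_tri hμ i).trans (sum_mul_tri_mixture_le hS hm hi fun t ht => ?_)
  have ht0 : 0 ≤ t := le_trans (by positivity) ht.1
  exact (sum_ite_le_fixedLoss_min hμ (fun z hz => (hS z hz).2) ht.1 ht.2).trans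
    (hK _ ⟨le_min ht0 zero_le_one, min_le_right t 1⟩)

theorem bddAbove_fixedLoss_image {S : Finset (ℝ × ℝ)} {μ : ℝ × ℝ → ℝ}
    (hμ : ∀ z ∈ S, 0 ≤ μ z) : BddAbove (fixedLoss S μ '' Set.Icc 0 1) := by
  refine ⟨∑ z ∈ S, μ z * (|condMean S μ z.1| + 1), ?_⟩
  rintro _ ⟨t, ⟨ht0, ht1⟩, rfl⟩
  refine sum_le_sum fun z hz => mul_le_mul_of_nonneg_left ?_ (hμ z hz)
  have := le_abs_self (condMean S μ z.1)
  have := neg_abs_le (condMean S μ z.1)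
  split_ifs <;> exact max_le (by linarith) (by positivity)

theorem SCFDL_le_sup_fixedLoss_general (S : Finset (ℝ × ℝ)) (μ : ℝ × ℝ → ℝ)
    (hμ : ∀ z ∈ S, 0 ≤ μ z)
    (hsupp : ∀ z ∈ S, z.1 ∈ Set.Icc (0:ℝ) 1 ∧ (z.2 = 0 ∨ z.2 = 1))
    (m : ℕ) (hm : 0 < m) :
    (∀ i : ℕ, i ≤ m →
        SCFDL m S μ Prod.fst Prod.snd i ≤ sSup (fixedLoss S μ '' Set.Icc 0 1))
    ∧ SCDLm m S μ Prod.fst Prod.snd ≤ sSup (fixedLoss S μ '' Set.Icc 0 1)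
    ∧ ∀ CDL : ℝ, sSup (fixedLoss S μ '' Set.Icc 0 1) ≤ CDL →
        SCDLm m S μ Prod.fst Prod.snd ≤ CDL := by
  have hSCFDL : ∀ i : ℕ, i ≤ m →
      SCFDL m S μ Prod.fst Prod.snd i ≤ sSup (fixedLoss S μ '' Set.Icc 0 1) :=
    fun i hi => SCFDL_le_of_forall_fixedLoss_le hμ (fun z hz => (hsupp z hz).1) hm
      (fun t ht => le_csSup (bddAbove_fixedLoss_image hμ) ⟨t, ht, rfl⟩) hi
  have hSCDLm : SCDLm m S μ Prod.fst Prod.snd ≤ sSup (fixedLoss S μ '' Set.Icc 0 1) :=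
    sup'_le _ _ fun i hi => hSCFDL i (Nat.lt_succ_iff.1 (mem_range.1 hi))
  exact ⟨hSCFDL, hSCDLm, fun _ hCDL => hSCDLm.trans hCDL⟩

/-- for every positive integer `m` and index `i ≤ m` the soft-binned
quantity `SCFDL_{m,i}(D)` is at most `sup_{t ∈ [0,1]} E[max(q-t,0)·1[p≤t] + max(t-q,0)·1[p>t]]`;
hence `SCDL_m(D)` is at most this supremum, and `SCDL_m(D) ≤ CDL(D)` for any `CDL(D)`
upper-bounding the supremum. -/
theorem SCFDL_le_sup_fixedLoss (S : Finset (ℝ × ℝ)) (μ : ℝ × ℝ → ℝ)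
    (hμ : ∀ z ∈ S, 0 ≤ μ z) (hsum : ∑ z ∈ S, μ z = 1)
    (hsupp : ∀ z ∈ S, z.1 ∈ Set.Icc (0:ℝ) 1 ∧ (z.2 = 0 ∨ z.2 = 1))
    (m : ℕ) (hm : 0 < m) :
    (∀ i : ℕ, i ≤ m →
        SCFDL m S μ Prod.fst Prod.snd i ≤ sSup (fixedLoss S μ '' Set.Icc 0 1))
    ∧ SCDLm m S μ Prod.fst Prod.snd ≤ sSup (fixedLoss S μ '' Set.Icc 0 1)
    ∧ ∀ CDL : ℝ, sSup (fixedLoss S μ '' Set.Icc 0 1) ≤ CDL →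
        SCDLm m S μ Prod.fst Prod.snd ≤ CDL :=
  SCFDL_le_sup_fixedLoss_general S μ hμ hsupp m hm
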